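/- Theorem (one-step subspace quality): Let 𝒱 ⊆ ℂ^n be a subspace, x a unit vector with x_⊥ = (I-P_V)x ≠ 0, and let v, ṽ be unit vectors orthogonal to 𝒱 with sin∠(v, x_⊥) ≠ 0 and with the angle ∠(ṽ, v) acute. Let ε̃ ≥ sin∠(ṽ, v) and suppose τ = 2ε̃ / sin∠(v, x_⊥) < 1. Then 1 - τ ≤ sin∠(𝒱̃₊, x) / sin∠(𝒱₊, x) ≤ 1 + τ, where 𝒱₊ = 𝒱 ⊕ span{v} and 𝒱̃₊ = 𝒱 ⊕ span{ṽ}. -/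

import Mathlib

/-!
Since `v ⊥ 𝒱`, projecting onto `𝒱 ⊕ span{v}` removes from `x` only the component of
`x_⊥` along `v`, so the residual is `(I - vvᴴ)x_⊥`, and likewise for `ṽ`. The rank-one
projectors `vvᴴ` and `ṽṽᴴ` differ by at most `2 sin∠(ṽ, v) ≤ 2ε̃` in norm, so the two residual
norms differ by at most `2ε̃‖x_⊥‖ = τ ‖(I - vvᴴ)x_⊥‖`.
-/

local notation "⟪" x ", " y "⟫" => @inner ℂ _ _ x y

/-- `sin∠(a, w) = ‖(I - aaᴴ)w‖ / ‖w‖` for a unit vector `a` and a vector `w`. -/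
noncomputable def sinAngle {E : Type*} [NormedAddCommGroup E] [InnerProductSpace ℂ E]
    (a w : E) : ℝ :=
  ‖w - ⟪a, w⟫ • a‖ / ‖w‖

section RankOne

variable {𝕜 E : Type*} [RCLike 𝕜] [NormedAddCommGroup E] [InnerProductSpace 𝕜 E]

theorem norm_sub_inner_smul_sq {a : E} (ha : ‖a‖ = 1) (w : E) :
    ‖w - inner 𝕜 a w • a‖ ^ 2 = ‖w‖ ^ 2 - ‖inner 𝕜 a w‖ ^ 2 := by
  rw [@norm_sub_sq 𝕜, inner_smul_right, norm_smul, ha, ← inner_conj_symm, RCLike.conj_mul]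
  simp only [RCLike.re_ofReal_pow, RCLike.norm_conj]
  ring

theorem norm_sub_inner_smul_comm {a b : E} (ha : ‖a‖ = 1) (hb : ‖b‖ = 1) :
    ‖b - inner 𝕜 a b • a‖ = ‖a - inner 𝕜 b a • b‖ := by
  rw [← sq_eq_sq₀ (norm_nonneg _) (norm_nonneg _), norm_sub_inner_smul_sq ha,
    norm_sub_inner_smul_sq hb, ha, hb, norm_inner_symm]

theorem norm_inner_smul_sub_inner_smul_le {a b : E} (ha : ‖a‖ = 1) (hb : ‖b‖ = 1) (w : E) :
    ‖inner 𝕜 a w • a - inner 𝕜 b w • b‖ ≤ 2 * ‖b - inner 𝕜 a b • a‖ * ‖w‖ := by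
  -- both coefficient vectors on the right have norm `sin∠(a, b)`
  have key : inner 𝕜 a w • a - inner 𝕜 b w • b
      = inner 𝕜 (a - inner 𝕜 b a • b) w • a - inner 𝕜 b w • (b - inner 𝕜 a b • a) := by
    rw [inner_sub_left, inner_smul_left, inner_conj_symm]
    module
  calc ‖inner 𝕜 a w • a - inner 𝕜 b w • b‖
      ≤ ‖inner 𝕜 (a - inner 𝕜 b a • b) w‖ * ‖a‖ + ‖inner 𝕜 b w‖ * ‖b - inner 𝕜 a b • a‖ := by
        rw [key, ← norm_smul, ← norm_smul]; exact norm_sub_le _ _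
    _ ≤ ‖a - inner 𝕜 b a • b‖ * ‖w‖ * 1 + ‖b‖ * ‖w‖ * ‖b - inner 𝕜 a b • a‖ := by
        rw [ha]
        gcongr
        · exact norm_inner_le_norm _ _
        · exact norm_inner_le_norm _ _
    _ = 2 * ‖b - inner 𝕜 a b • a‖ * ‖w‖ := by
        rw [← norm_sub_inner_smul_comm ha hb, hb]; ring

theorem abs_norm_sub_inner_smul_sub_le {a b : E} (ha : ‖a‖ = 1) (hb : ‖b‖ = 1) (w : E) :
    |‖w - inner 𝕜 b w • b‖ - ‖w - inner 𝕜 a w • a‖| ≤ 2 * ‖b - inner 𝕜 a b • a‖ * ‖w‖ := by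
  refine (abs_norm_sub_norm_le _ _).trans ?_
  rw [sub_sub_sub_cancel_left]
  exact norm_inner_smul_sub_inner_smul_le ha hb w

theorem sub_starProjection_sup_span_singleton (K : Submodule 𝕜 E) [K.HasOrthogonalProjection]
    {v : E} [(K ⊔ 𝕜 ∙ v).HasOrthogonalProjection] (hv : ‖v‖ = 1) (hvK : v ∈ Kᗮ) (x : E) :
    x - (K ⊔ 𝕜 ∙ v).starProjection x
      = (x - K.starProjection x) - inner 𝕜 v (x - K.starProjection x) • v := by
  set w := x - K.starProjection x
  have hproj : (K ⊔ 𝕜 ∙ v).starProjection x = K.starProjection x + inner 𝕜 v w • v := by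
    refine Submodule.eq_starProjection_of_mem_orthogonal'
      (Submodule.add_mem_sup (K.starProjection_apply_mem x)
        (Submodule.smul_mem _ _ (Submodule.mem_span_singleton_self v)))
      (z := w - inner 𝕜 v w • v) ?_ (by simp only [w]; abel)
    rw [← Submodule.inf_orthogonal]
    refine Submodule.mem_inf.2
      ⟨Submodule.sub_mem _ (K.sub_starProjection_mem_orthogonal x) (Submodule.smul_mem _ _ hvK), ?_⟩
    rw [Submodule.mem_orthogonal_singleton_iff_inner_right, inner_sub_right, inner_smul_right,
      inner_self_eq_norm_sq_to_K, hv]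
    simp
  rw [hproj, sub_add_eq_sub_sub]

end RankOne

theorem one_sub_le_div_and_div_le_one_add {s t τ : ℝ} (hs : 0 < s) (h : |t - s| ≤ τ * s) :
    1 - τ ≤ t / s ∧ t / s ≤ 1 + τ := by
  obtain ⟨hlo, hhi⟩ := abs_le.1 h
  constructor
  · rw [le_div_iff₀ hs]; linarith
  · rw [div_le_iff₀ hs]; linarith

theorem one_step_subspace_quality_general {E : Type*} [NormedAddCommGroup E]
    [InnerProductSpace ℂ E] [FiniteDimensional ℂ E]
    (K : Submodule ℂ E) (x v vt : E)
    (hv : ‖v‖ = 1) (hvt : ‖vt‖ = 1)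
    (hvK : v ∈ Kᗮ) (hvtK : vt ∈ Kᗮ)
    (hsv : sinAngle v (x - (Submodule.orthogonalProjectionOnto K x : E)) ≠ 0)
    (εt τ : ℝ)
    (hεt : sinAngle v vt ≤ εt)
    (hτ : τ = 2 * εt / sinAngle v (x - (Submodule.orthogonalProjectionOnto K x : E))) :
    1 - τ ≤ ‖x - (Submodule.orthogonalProjectionOnto (K ⊔ Submodule.span ℂ {vt}) x : E)‖
              / ‖x - (Submodule.orthogonalProjectionOnto (K ⊔ Submodule.span ℂ {v}) x : E)‖
      ∧ ‖x - (Submodule.orthogonalProjectionOnto (K ⊔ Submodule.span ℂ {vt}) x : E)‖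
          / ‖x - (Submodule.orthogonalProjectionOnto (K ⊔ Submodule.span ℂ {v}) x : E)‖ ≤ 1 + τ := by
  simp only [← Submodule.starProjection_apply, sub_starProjection_sup_span_singleton K hv hvK,
    sub_starProjection_sup_span_singleton K hvt hvtK] at hsv hτ ⊢
  set w := x - K.starProjection x
  have hs := (div_ne_zero_iff.1 hsv).1
  have hτs : τ * ‖w - ⟪v, w⟫ • v‖ = 2 * εt * ‖w‖ := by
    rw [hτ, sinAngle]; field_simp
  refine one_sub_le_div_and_div_le_one_add ((norm_nonneg _).lt_of_ne' hs) ?_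
  calc |‖w - ⟪vt, w⟫ • vt‖ - ‖w - ⟪v, w⟫ • v‖|
      ≤ 2 * sinAngle v vt * ‖w‖ := by
        simpa only [sinAngle, hvt, div_one] using abs_norm_sub_inner_smul_sub_le hv hvt w
    _ ≤ τ * ‖w - ⟪v, w⟫ • v‖ := by rw [hτs]; gcongr

/-- Theorem 4, one-step subspace quality: if `sin∠(ṽ, v) ≤ ε̃` and
`τ = 2ε̃ / sin∠(v, x_⊥) < 1`, then
`1 - τ ≤ sin∠(𝒱̃₊, x) / sin∠(𝒱₊, x) ≤ 1 + τ`. -/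
theorem one_step_subspace_quality {E : Type*} [NormedAddCommGroup E]
    [InnerProductSpace ℂ E] [FiniteDimensional ℂ E]
    (K : Submodule ℂ E) (x v vt : E)
    (hx : ‖x‖ = 1) (hv : ‖v‖ = 1) (hvt : ‖vt‖ = 1)
    (hvK : v ∈ Kᗮ) (hvtK : vt ∈ Kᗮ)
    (hxp : x - (Submodule.orthogonalProjectionOnto K x : E) ≠ 0)
    (hsv : sinAngle v (x - (Submodule.orthogonalProjectionOnto K x : E)) ≠ 0)
    (εt τ : ℝ)
    (hεt : sinAngle v vt ≤ εt)
    (hτ : τ = 2 * εt / sinAngle v (x - (Submodule.orthogonalProjectionOnto K x : E)))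
    (hτ1 : τ < 1) :
    1 - τ ≤ ‖x - (Submodule.orthogonalProjectionOnto (K ⊔ Submodule.span ℂ {vt}) x : E)‖
              / ‖x - (Submodule.orthogonalProjectionOnto (K ⊔ Submodule.span ℂ {v}) x : E)‖
      ∧ ‖x - (Submodule.orthogonalProjectionOnto (K ⊔ Submodule.span ℂ {vt}) x : E)‖
          / ‖x - (Submodule.orthogonalProjectionOnto (K ⊔ Submodule.span ℂ {v}) x : E)‖ ≤ 1 + τ :=
  one_step_subspace_quality_general K x v vt hv hvt hvK hvtK hsv εt τ hεt hτ
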